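/- Let φ be a proper partial (Δ+1)-edge-coloring and let xy be a (φ,αβ)-successful uncolored edge: xy is not φ-happy, both x and y have degree < 2 in the αβ-colored subgraph, and x and y lie in different components of the αβ-colored subgraph. Then the chain P(x,y,φ,αβ) = (xy, e₁,...,e_k), where (e₁,...,e_k) is the αβ-alternating path starting at y, is φ-happy: it is φ-shiftable and its last edge is Shift(φ,P)-happy. -/

import Mathlib

/-!
Both `x` and `y` have `αβ`-degree at most one, so each misses `α` or `β`; since `xy` is not
happy they miss different ones, say `γ' ∈ M(x)` and `γ ∈ M(y)`. The path from `y` therefore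
starts with a `γ'`-edge, which can be shifted onto `xy`; afterwards `γ'` is missing at the next
vertex and `γ` at `y`, so the situation repeats with the roles of `γ` and `γ'` exchanged. At the
end of the path every `αβ`-edge at the last vertex has been uncolored, so the color missing at
the other end of the final uncolored edge is missing at both of its ends.
-/

open SimpleGraph

variable {V : Type*} [DecidableEq V]

/-- Two edges (as unordered pairs of vertices) are adjacent: distinct and sharing an endpoint. -/
def EdgeAdj (e f : Sym2 V) : Prop := e ≠ f ∧ ∃ v, v ∈ e ∧ v ∈ f

/-- A proper partial edge-coloring of `G` with colors `{1,…,Δ+1}` (as `Fin (Δ+1)`):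
its domain consists of edges of `G`, and adjacent colored edges get distinct colors. -/
def IsProperPartial (G : SimpleGraph V) (Δ : ℕ)
    (φ : Sym2 V → Option (Fin (Δ + 1))) : Prop :=
  (∀ e, (φ e).isSome → e ∈ G.edgeSet) ∧
  ∀ e f, EdgeAdj e f → (φ e).isSome → φ e ≠ φ f

/-- The set `M(φ,x)` of colors missing at `x`. -/
def missingColors (G : SimpleGraph V) (Δ : ℕ)
    (φ : Sym2 V → Option (Fin (Δ + 1))) (x : V) : Set (Fin (Δ + 1)) :=
  {c | ∀ y, G.Adj x y → φ s(x, y) ≠ some c}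

/-- `Shift φ e₀ e₁`: move the color of `e₁` to `e₀`, uncolor `e₁`, keep all else. -/
def Shift {α : Type*} (φ : Sym2 V → Option α) (e₀ e₁ : Sym2 V) :
    Sym2 V → Option α :=
  fun e => if e = e₀ then φ e₁ else if e = e₁ then none else φ e

/-- `(e₀, e₁)` is a `φ`-shiftable pair. -/
def ShiftablePair (G : SimpleGraph V) (Δ : ℕ) (φ : Sym2 V → Option (Fin (Δ + 1)))
    (e₀ e₁ : Sym2 V) : Prop :=
  EdgeAdj e₀ e₁ ∧ e₀ ∈ G.edgeSet ∧ φ e₀ = none ∧ (φ e₁).isSome ∧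
    IsProperPartial G Δ (Shift φ e₀ e₁)

/-- Shifting a coloring along a chain (list of edges). -/
def ShiftChain {α : Type*} : List (Sym2 V) → (Sym2 V → Option α) → (Sym2 V → Option α)
  | [], φ => φ
  | [_], φ => φ
  | e₀ :: e₁ :: rest, φ => ShiftChain (e₁ :: rest) (Shift φ e₀ e₁)

/-- A chain is `φ`-shiftable: each consecutive pair is shiftable w.r.t. the current coloring
(for a single-edge chain we require the edge to be an uncolored edge of `G`). -/
def ChainShiftable (G : SimpleGraph V) (Δ : ℕ) :
    List (Sym2 V) → (Sym2 V → Option (Fin (Δ + 1))) → Prop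
  | [], _ => True
  | [e], φ => φ e = none ∧ e ∈ G.edgeSet
  | e₀ :: e₁ :: rest, φ =>
      ShiftablePair G Δ φ e₀ e₁ ∧ ChainShiftable G Δ (e₁ :: rest) (Shift φ e₀ e₁)

/-- The spanning subgraph `G(φ, αβ)` of edges colored `α` or `β`. -/
def abSub (G : SimpleGraph V) (Δ : ℕ) (φ : Sym2 V → Option (Fin (Δ + 1)))
    (α β : Fin (Δ + 1)) : SimpleGraph V where
  Adj x y := G.Adj x y ∧ (φ s(x, y) = some α ∨ φ s(x, y) = some β)
  symm := by
    constructor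
    intro x y h
    refine ⟨h.1.symm, ?_⟩
    rw [Sym2.eq_swap]
    exact h.2
  loopless := ⟨fun x h => G.loopless.irrefl x h.1⟩

/-- A chain is `φ`-happy: it is `φ`-shiftable and its last edge is happy after shifting. -/
def ChainHappy (G : SimpleGraph V) (Δ : ℕ) (C : List (Sym2 V))
    (φ : Sym2 V → Option (Fin (Δ + 1))) : Prop :=
  ChainShiftable G Δ C φ ∧
    ∃ x y : V, C.getLast? = some s(x, y) ∧
      (missingColors G Δ (ShiftChain C φ) x ∩ missingColors G Δ (ShiftChain C φ) y).Nonempty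

section ProperColoring

-- A fresh `V`, so that the ambient `[DecidableEq V]` is not added to these lemmas.
variable {V : Type*} {G : SimpleGraph V} {Δ : ℕ} {ψ : Sym2 V → Option (Fin (Δ + 1))}

theorem IsProperPartial.adj_of_eq_some (hψ : IsProperPartial G Δ ψ) {a b : V}
    {c : Fin (Δ + 1)} (h : ψ s(a, b) = some c) : G.Adj a b :=
  G.mem_edgeSet.mp (hψ.1 _ (by simp [h]))

theorem IsProperPartial.eq_of_mem_of_eq_some (hψ : IsProperPartial G Δ ψ) {e f : Sym2 V}
    {v : V} (he : v ∈ e) (hf : v ∈ f) {c : Fin (Δ + 1)} (hec : ψ e = some c)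
    (hfc : ψ f = some c) : e = f := by
  by_contra hne
  exact hψ.2 e f ⟨hne, v, he, hf⟩ (by simp [hec]) (hec.trans hfc.symm)

theorem isProperPartial_of_eq_of_mem
    (hdom : ∀ e (c : Fin (Δ + 1)), ψ e = some c → e ∈ G.edgeSet)
    (huniq : ∀ e f v c, v ∈ e → v ∈ f → ψ e = some c → ψ f = some c → e = f) :
    IsProperPartial G Δ ψ := by
  refine ⟨fun e he => ?_, fun e f ⟨hne, v, hve, hvf⟩ he hef => ?_⟩
  · obtain ⟨c, hc⟩ := Option.isSome_iff_exists.mp he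
    exact hdom e c hc
  · obtain ⟨c, hc⟩ := Option.isSome_iff_exists.mp he
    exact hne (huniq e f v c hve hvf hc (hef ▸ hc))

theorem abSub_neighborSet_finite (hψ : IsProperPartial G Δ ψ) (α β : Fin (Δ + 1)) (v : V) :
    ((abSub G Δ ψ α β).neighborSet v).Finite := by
  have hsub : ∀ c, {w | ψ s(v, w) = some c}.Subsingleton := fun c w₁ h₁ w₂ h₂ =>
    Sym2.congr_right.mp
      (hψ.eq_of_mem_of_eq_some (Sym2.mem_mk_left _ _) (Sym2.mem_mk_left _ _) h₁ h₂)
  exact ((hsub α).finite.union (hsub β).finite).subset fun w hw => hw.2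

theorem mem_missingColors_or_of_ncard_lt_two (hψ : IsProperPartial G Δ ψ)
    {α β : Fin (Δ + 1)} (hab : α ≠ β) {v : V} (hv : ((abSub G Δ ψ α β).neighborSet v).ncard < 2) :
    α ∈ missingColors G Δ ψ v ∨ β ∈ missingColors G Δ ψ v := by
  by_contra! h
  simp only [missingColors, Set.mem_ofPred_eq, not_forall, not_not, exists_prop] at h
  obtain ⟨⟨w₁, hw₁, h₁⟩, w₂, hw₂, h₂⟩ := h
  have hne : w₁ ≠ w₂ := by
    rintro rfl
    exact hab (Option.some_injective _ (h₁.symm.trans h₂))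
  have := (Set.one_lt_ncard (abSub_neighborSet_finite hψ α β v)).mpr
    ⟨w₁, ⟨hw₁, .inl h₁⟩, w₂, ⟨hw₂, .inr h₂⟩, hne⟩
  omega

theorem exists_missingColors_of_not_happy (hψ : IsProperPartial G Δ ψ)
    {α β : Fin (Δ + 1)} (hab : α ≠ β) {x y : V}
    (hxy : missingColors G Δ ψ x ∩ missingColors G Δ ψ y = ∅)
    (hx : ((abSub G Δ ψ α β).neighborSet x).ncard < 2)
    (hy : ((abSub G Δ ψ α β).neighborSet y).ncard < 2) :
    ∃ γ γ', γ ≠ γ' ∧ γ ∈ missingColors G Δ ψ y ∧ γ' ∈ missingColors G Δ ψ x ∧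
      ∀ o : Option (Fin (Δ + 1)), (o = some α ∨ o = some β) ↔ (o = some γ ∨ o = some γ') := by
  have hdisj : ∀ c, c ∈ missingColors G Δ ψ x → c ∉ missingColors G Δ ψ y :=
    fun c hcx hcy => hxy.subset ⟨hcx, hcy⟩
  rcases mem_missingColors_or_of_ncard_lt_two hψ hab hx with hxα | hxβ <;>
    rcases mem_missingColors_or_of_ncard_lt_two hψ hab hy with hyα | hyβ
  · exact absurd hyα (hdisj α hxα)
  · exact ⟨β, α, hab.symm, hyβ, hxα, fun _ => or_comm⟩
  · exact ⟨α, β, hab, hyα, hxβ, fun _ => Iff.rfl⟩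
  · exact absurd hyβ (hdisj β hxβ)

end ProperColoring

section Shift

variable {κ : Type*} {φ : Sym2 V → Option κ} {e e₀ e₁ : Sym2 V}

theorem shift_apply_right (h : e₁ ≠ e₀) : Shift φ e₀ e₁ e₁ = none := by
  simp [Shift, h]

theorem shift_apply_of_ne (h₀ : e ≠ e₀) (h₁ : e ≠ e₁) : Shift φ e₀ e₁ e = φ e := by
  simp [Shift, h₀, h₁]

theorem shift_eq_some_iff {c : κ} :
    Shift φ e₀ e₁ e = some c ↔ e = e₀ ∧ φ e₁ = some c ∨ e ≠ e₀ ∧ e ≠ e₁ ∧ φ e = some c := by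
  unfold Shift
  split_ifs <;> simp_all

end Shift

section Coloring

variable {G : SimpleGraph V} {Δ : ℕ} {ψ : Sym2 V → Option (Fin (Δ + 1))}

theorem shiftablePair_of_mem_missingColors (hψ : IsProperPartial G Δ ψ) {p u v : V}
    {c : Fin (Δ + 1)} (hpu : G.Adj p u) (hpu₀ : ψ s(p, u) = none) (huv : ψ s(u, v) = some c)
    (hc : c ∈ missingColors G Δ ψ p) : ShiftablePair G Δ ψ s(p, u) s(u, v) := by
  have hne : s(p, u) ≠ s(u, v) := fun h => by simp [h, huv] at hpu₀
  have hclash : ∀ g w, w ∈ s(p, u) → w ∈ g → ψ g = some c → g = s(u, v) := by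
    intro g w hw hwg hg
    rcases Sym2.mem_iff.mp hw with rfl | rfl
    · obtain ⟨w', rfl⟩ := Sym2.mem_iff_exists.mp hwg
      exact absurd hg (hc w' (hψ.adj_of_eq_some hg))
    · exact hψ.eq_of_mem_of_eq_some hwg (Sym2.mem_mk_left _ _) hg huv
  refine ⟨⟨hne, u, Sym2.mem_mk_right p u, Sym2.mem_mk_left u v⟩, hpu, hpu₀, by simp [huv],
    isProperPartial_of_eq_of_mem (fun e d he => ?_) (fun e f w d hwe hwf he hf => ?_)⟩
  · rcases shift_eq_some_iff.mp he with ⟨rfl, -⟩ | ⟨-, -, he⟩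
    exacts [hpu, hψ.1 e (by simp [he])]
  · rcases shift_eq_some_iff.mp he with ⟨he₀, he⟩ | ⟨he₀, he₁, he⟩ <;>
      rcases shift_eq_some_iff.mp hf with ⟨hf₀, hf⟩ | ⟨hf₀, hf₁, hf⟩
    · exact he₀.trans hf₀.symm
    · exact absurd (hclash f w (he₀ ▸ hwe) hwf (hf.trans (he.symm.trans huv))) hf₁
    · exact absurd (hclash e w (hf₀ ▸ hwf) hwe (he.trans (hf.symm.trans huv))) he₁
    · exact hψ.eq_of_mem_of_eq_some hwe hwf he hf

theorem mem_missingColors_shift {e₀ e₁ : Sym2 V} {x : V} {c : Fin (Δ + 1)}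
    (hx : ∀ w, G.Adj x w → ψ s(x, w) = some c → s(x, w) = e₁)
    (h₀ : x ∈ e₀ → ψ e₁ ≠ some c) :
    c ∈ missingColors G Δ (Shift ψ e₀ e₁) x := by
  intro w hw hc
  rcases shift_eq_some_iff.mp hc with ⟨h, hc⟩ | ⟨-, h₁, hc⟩
  · exact h₀ (h ▸ Sym2.mem_mk_left x w) hc
  · exact h₁ (hx w hw hc)

theorem chainHappy_cons {e₀ e₁ : Sym2 V} {l : List (Sym2 V)}
    (hS : ShiftablePair G Δ ψ e₀ e₁) (hH : ChainHappy G Δ (e₁ :: l) (Shift ψ e₀ e₁)) :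
    ChainHappy G Δ (e₀ :: e₁ :: l) ψ := by
  obtain ⟨hsh, a, b, hlast, hab⟩ := hH
  exact ⟨⟨hS, hsh⟩, a, b, by rwa [List.getLast?_cons_cons], hab⟩

/-- The walk may live in any graph `H`: its edges are colored, hence edges of `G`. -/
theorem chainHappy_of_alternating_path {H : SimpleGraph V} {u z : V} (W : H.Walk u z)
    (hW : W.IsPath) {γ γ' : Fin (Δ + 1)} (hγ : γ ≠ γ') {p : V} (hψ : IsProperPartial G Δ ψ)
    (hpu : G.Adj p u) (hpu₀ : ψ s(p, u) = none) (hpW : p ∉ W.support)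
    (hγu : γ ∈ missingColors G Δ ψ u) (hγ'p : γ' ∈ missingColors G Δ ψ p)
    (hcol : ∀ e ∈ W.edges, ψ e = some γ ∨ ψ e = some γ')
    (hmax : ∀ w, G.Adj z w → (ψ s(z, w) = some γ ∨ ψ s(z, w) = some γ') →
      s(z, w) ∈ s(p, u) :: W.edges) :
    ChainHappy G Δ (s(p, u) :: W.edges) ψ := by
  induction W generalizing ψ p γ γ' with
  | @nil u =>
    refine ⟨⟨hpu₀, hpu⟩, p, u, rfl, γ', hγ'p, fun w hw hc => ?_⟩
    have hpw : s(u, w) = s(p, u) := by simpa using hmax w hw (.inr hc)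
    simp_all [ShiftChain]
  | @cons u v z huv W' ih =>
    obtain ⟨hW', huW'⟩ := (Walk.cons_isPath_iff huv W').mp hW
    have hpW' : p ∉ W'.support := fun h => hpW (List.mem_cons_of_mem _ h)
    have hout : ∀ x ∈ W'.support, x ∉ s(p, u) := by
      intro x hx hmem
      rcases Sym2.mem_iff.mp hmem with rfl | rfl
      exacts [hpW' hx, huW' hx]
    have hc₁ : ψ s(u, v) = some γ' :=
      (hcol _ List.mem_cons_self).resolve_left fun hc => hγu v (hψ.adj_of_eq_some hc) hc
    have hS := shiftablePair_of_mem_missingColors hψ hpu hpu₀ hc₁ hγ'p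
    have hW'edges : ∀ e ∈ W'.edges, Shift ψ s(p, u) s(u, v) e = ψ e := fun e he =>
      shift_apply_of_ne (by rintro rfl; exact hpW' (W'.fst_mem_support_of_mem_edges he))
        (by rintro rfl; exact huW' (W'.fst_mem_support_of_mem_edges he))
    rw [Walk.edges_cons]
    refine chainHappy_cons hS (ih hW' hγ.symm hS.2.2.2.2 (hψ.adj_of_eq_some hc₁)
      (shift_apply_right hS.1.1.symm) huW' ?_ ?_ ?_ ?_)
    · exact mem_missingColors_shift
        (fun w _ hc => hψ.eq_of_mem_of_eq_some (Sym2.mem_mk_left v w) (Sym2.mem_mk_right u v)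
          hc hc₁)
        (fun h => absurd h (hout v W'.start_mem_support))
    · exact mem_missingColors_shift (fun w hw hc => absurd hc (hγu w hw))
        (fun _ => hc₁ ▸ fun h => hγ (Option.some_injective _ h).symm)
    · exact fun e he => hW'edges e he ▸ (hcol e (List.mem_cons_of_mem _ he)).symm
    · intro w hw hc
      by_cases h₁ : s(z, w) = s(u, v)
      · exact h₁ ▸ List.mem_cons_self
      have h₀ : s(z, w) ≠ s(p, u) :=
        fun h => hout z W'.end_mem_support (h ▸ Sym2.mem_mk_left z w)
      rw [shift_apply_of_ne h₀ h₁] at hc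
      simpa [h₀] using hmax w hw hc.symm

end Coloring

theorem alternating_chain_happy_general (G : SimpleGraph V) (Δ : ℕ)
    (φ : Sym2 V → Option (Fin (Δ + 1))) (hφ : IsProperPartial G Δ φ)
    (α β : Fin (Δ + 1)) (hab : α ≠ β) (x y z : V) (hadj : G.Adj x y)
    (hunc : φ s(x, y) = none)
    (hnothappy : missingColors G Δ φ x ∩ missingColors G Δ φ y = ∅)
    (hx : ((abSub G Δ φ α β).neighborSet x).ncard < 2)
    (hy : ((abSub G Δ φ α β).neighborSet y).ncard < 2)
    (hsucc : ¬ (abSub G Δ φ α β).Reachable x y)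
    (W : (abSub G Δ φ α β).Walk y z) (hWp : W.IsPath)
    (hWmax : ∀ w, (abSub G Δ φ α β).Adj z w → s(z, w) ∈ W.edges) :
    ChainHappy G Δ (s(x, y) :: W.edges) φ := by
  obtain ⟨γ, γ', hγ, hγy, hγ'x, hcolors⟩ :=
    exists_missingColors_of_not_happy hφ hab hnothappy hx hy
  have hxW : x ∉ W.support := fun h => hsucc (W.takeUntil x h).reachable.symm
  have hcol : ∀ e ∈ W.edges, φ e = some γ ∨ φ e = some γ' := by
    intro e he
    induction e using Sym2.ind with
    | h a b =>
      exact (hcolors _).mp ((abSub G Δ φ α β).mem_edgeSet.mp (W.edges_subset_edgeSet he)).2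
  exact chainHappy_of_alternating_path W hWp hγ hφ hadj hunc hxW hγy hγ'x hcol
    fun w hw hc => List.mem_cons_of_mem _ (hWmax w ⟨hw, (hcolors _).mpr hc⟩)

/-- for a `(φ,αβ)`-successful uncolored edge `xy` (hopeful and with `x`, `y`
in different components of the `αβ`-subgraph), the chain `P(x,y,φ,αβ)` is `φ`-happy. -/
theorem alternating_chain_happy [Fintype V] (G : SimpleGraph V) (Δ : ℕ)
    (φ : Sym2 V → Option (Fin (Δ + 1))) (hφ : IsProperPartial G Δ φ)
    (α β : Fin (Δ + 1)) (hab : α ≠ β) (x y z : V) (hadj : G.Adj x y)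
    (hunc : φ s(x, y) = none)
    (hnothappy : missingColors G Δ φ x ∩ missingColors G Δ φ y = ∅)
    (hx : ((abSub G Δ φ α β).neighborSet x).ncard < 2)
    (hy : ((abSub G Δ φ α β).neighborSet y).ncard < 2)
    (hsucc : ¬ (abSub G Δ φ α β).Reachable x y)
    (W : (abSub G Δ φ α β).Walk y z) (hWp : W.IsPath)
    (hWmax : ∀ w, (abSub G Δ φ α β).Adj z w → s(z, w) ∈ W.edges) :
    ChainHappy G Δ (s(x, y) :: W.edges) φ :=
  alternating_chain_happy_general G Δ φ hφ α β hab x y z hadj hunc hnothappy hx hy hsucc W hWp hWmax
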